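/- Let g : ℝⁿ → ℝⁿ be differentiable and satisfy the lower Lipschitz bound μ|x − x′| ≤ |g(x) − g(x′)| for all x, x′, where μ > 0, and suppose g(x⋆) = 0. Define H(x) = ½|g(x)|². Then ∇H(x⋆) = 0 and ∇H(x) ≠ 0 for every x ≠ x⋆; that is, x⋆ is the unique critical point of H. -/

import Mathlib

/-!
The gradient of `H = ½‖g‖²` at `x` is `(Dg x)† (g x)`. It vanishes at `x⋆` because `g x⋆ = 0`.
Elsewhere `g x ≠ 0` by the lower Lipschitz bound, which also passes to the derivative:
`μ‖v‖ ≤ ‖Dg x v‖`. So `Dg x` is injective, hence (in finite dimension) surjective, and its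
adjoint, whose kernel is the orthogonal complement of the range, is injective.
-/

open Filter Function

theorem injective_of_mul_norm_sub_le {E F : Type*} [NormedAddCommGroup E]
    [SeminormedAddCommGroup F] {g : E → F} {μ : ℝ} (hμ : 0 < μ)
    (hlow : ∀ x y, μ * ‖x - y‖ ≤ ‖g x - g y‖) : Injective g := fun x y h => by
  have := hlow x y
  rw [h, sub_self, norm_zero] at this
  exact sub_eq_zero.1 (norm_le_zero_iff.1 (nonpos_of_mul_nonpos_right this hμ))

section LowerLipschitz

variable {E F : Type*} [NormedAddCommGroup E] [NormedSpace ℝ E]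
  [NormedAddCommGroup F] [NormedSpace ℝ F] {g : E → F} {A : E →L[ℝ] F} {x : E} {μ : ℝ}

theorem HasFDerivAt.mul_norm_le_norm_apply (hg : HasFDerivAt g A x)
    (hlow : ∀ y, μ * ‖y - x‖ ≤ ‖g y - g x‖) (v : E) : μ * ‖v‖ ≤ ‖A v‖ := by
  have hlim := (hg.lim v (c := fun n : ℕ => (n : ℝ))
    (by simpa using tendsto_natCast_atTop_atTop)).norm
  refine ge_of_tendsto hlim ?_
  filter_upwards [eventually_gt_atTop 0] with n hn
  have hn : (0 : ℝ) < n := by exact_mod_cast hn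
  calc μ * ‖v‖ = n * (μ * ‖(n : ℝ)⁻¹ • v‖) := by
        rw [norm_smul, norm_inv, Real.norm_of_nonneg hn.le]; field_simp
    _ ≤ n * ‖g (x + (n : ℝ)⁻¹ • v) - g x‖ := by
        gcongr; simpa using hlow (x + (n : ℝ)⁻¹ • v)
    _ = ‖(n : ℝ) • (g (x + (n : ℝ)⁻¹ • v) - g x)‖ := by
        rw [norm_smul, Real.norm_of_nonneg hn.le]

theorem HasFDerivAt.injective_of_lower_lipschitz (hg : HasFDerivAt g A x) (hμ : 0 < μ)
    (hlow : ∀ y, μ * ‖y - x‖ ≤ ‖g y - g x‖) : Injective A :=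
  injective_of_mul_norm_sub_le hμ fun v w => by
    simpa only [map_sub] using hg.mul_norm_le_norm_apply hlow (v - w)

end LowerLipschitz

theorem ContinuousLinearMap.injective_adjoint_of_injective {𝕜 E : Type*} [RCLike 𝕜]
    [NormedAddCommGroup E] [InnerProductSpace 𝕜 E] [CompleteSpace E] [FiniteDimensional 𝕜 E]
    {A : E →L[𝕜] E} (hA : Injective A) : Injective (adjoint A) := by
  have hsurj : Surjective (A : E →ₗ[𝕜] E) := LinearMap.injective_iff_surjective.1 hA
  have hker : (adjoint A : E →ₗ[𝕜] E).ker = ⊥ := by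
    rw [← A.orthogonal_range, LinearMap.range_eq_top.2 hsurj, Submodule.top_orthogonal_eq_bot]
  exact LinearMap.ker_eq_bot.1 hker

theorem HasFDerivAt.hasGradientAt_half_norm_sq {E F : Type*}
    [NormedAddCommGroup E] [InnerProductSpace ℝ E] [CompleteSpace E]
    [NormedAddCommGroup F] [InnerProductSpace ℝ F] [CompleteSpace F]
    {g : E → F} {A : E →L[ℝ] F} {x : E} (hg : HasFDerivAt g A x) :
    HasGradientAt (fun y => (1 / 2 : ℝ) * ‖g y‖ ^ 2) (ContinuousLinearMap.adjoint A (g x)) x := by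
  rw [hasGradientAt_iff_hasFDerivAt]
  refine (hg.norm_sq.const_mul (1 / 2 : ℝ)).congr_fderiv ?_
  ext v
  simp [ContinuousLinearMap.adjoint_inner_left]

/-- If `g` is differentiable with lower Lipschitz constant `μ > 0` and
`g(x⋆) = 0`, then `H(x) = ½|g(x)|²` has `∇H(x⋆) = 0` while `∇H(x) ≠ 0` for all
`x ≠ x⋆`; that is, `x⋆` is the unique critical point of `H`. -/
theorem plnet_unique_critical_point
    {n : ℕ} (μ : ℝ) (hμ : 0 < μ)
    (g : EuclideanSpace ℝ (Fin n) → EuclideanSpace ℝ (Fin n))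
    (hg : Differentiable ℝ g)
    (hlow : ∀ x x' : EuclideanSpace ℝ (Fin n), μ * ‖x - x'‖ ≤ ‖g x - g x'‖)
    (xs : EuclideanSpace ℝ (Fin n)) (hxs : g xs = 0)
    (H : EuclideanSpace ℝ (Fin n) → ℝ)
    (hH : H = fun x => (1 / 2 : ℝ) * ‖g x‖ ^ 2) :
    gradient H xs = 0 ∧
      ∀ x : EuclideanSpace ℝ (Fin n), x ≠ xs → gradient H x ≠ 0 := by
  have hgrad : ∀ x, gradient H x = ContinuousLinearMap.adjoint (fderiv ℝ g x) (g x) := fun x => by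
    subst hH; exact (hg x).hasFDerivAt.hasGradientAt_half_norm_sq.gradient
  refine ⟨by rw [hgrad, hxs, map_zero], fun x hx => ?_⟩
  have hgx : g x ≠ 0 := fun h => hx (injective_of_mul_norm_sub_le hμ hlow (h.trans hxs.symm))
  have hA := (hg x).hasFDerivAt.injective_of_lower_lipschitz hμ (fun y => hlow y x)
  rw [hgrad, ← map_zero (ContinuousLinearMap.adjoint (fderiv ℝ g x))]
  exact (ContinuousLinearMap.injective_adjoint_of_injective hA).ne hgx
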